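/- arXiv:math/9611205 — 2 statements merged into one kernel-verified Lean document; each statement's English description precedes it below -/
import Mathlib

section
/- If the groups G₁ and G₂ each have a finite complete rewriting system, then their free product G₁ * G₂ has a finite complete rewriting system. -/
/-- One step of rewriting: `w` rewrites to `w'` by replacing a factor `u`
(the left-hand side of a rule in `R`) with `v` (the right-hand side). -/
def RewStep {α : Type} (R : Set (FreeMonoid α × FreeMonoid α))
    (w w' : FreeMonoid α) : Prop :=
  ∃ x u v y : FreeMonoid α, (u, v) ∈ R ∧ w = x * u * y ∧ w' = x * v * y

/-- A word is irreducible if it contains no left-hand side of a rule as a factor. -/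
def RewIrreducible {α : Type} (R : Set (FreeMonoid α × FreeMonoid α))
    (w : FreeMonoid α) : Prop :=
  ¬ ∃ x u v y : FreeMonoid α, (u, v) ∈ R ∧ w = x * u * y

/-- `(π, R)` is a complete rewriting system for the group `G`:
(i) the induced monoid homomorphism `A* → G` is surjective and the monoid presented by
`⟨A ∣ u = v, (u,v) ∈ R⟩` maps isomorphically onto `G` (its defining congruence is exactly
the kernel congruence of the evaluation);
(ii) there is no infinite sequence of rewritings (Noetherian);
(iii) every element of `G` has exactly one irreducible representative word. -/
def IsCompleteRewritingSystem {α : Type} {G : Type*} [Group G] (π : α → G)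
    (R : Set (FreeMonoid α × FreeMonoid α)) : Prop :=
  Function.Surjective (FreeMonoid.lift π) ∧
  (∀ u v : FreeMonoid α,
      FreeMonoid.lift π u = FreeMonoid.lift π v ↔
        conGen (fun w w' => (w, w') ∈ R) u v) ∧
  (∀ f : ℕ → FreeMonoid α, ¬ ∀ m : ℕ, RewStep R (f m) (f (m + 1))) ∧
  (∀ g : G, ∃! w : FreeMonoid α, FreeMonoid.lift π w = g ∧ RewIrreducible R w)

/-- A group has a finite complete rewriting system if there are a finite alphabet `α`,
a map `π : α → G` and a finite set of rules `R` forming a complete rewriting system. -/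
def HasFiniteCompleteRewritingSystem (G : Type*) [Group G] : Prop :=
  ∃ (α : Type) (_ : Finite α) (π : α → G)
    (R : Set (FreeMonoid α × FreeMonoid α)),
    R.Finite ∧ IsCompleteRewritingSystem π R

/-!
Put the two alphabets and the two rule sets side by side. A rewriting step changes only the
`α₁`-letters or only the `α₂`-letters of a word, and on the projection of the word to that
alphabet it is a step of the corresponding factor system; so the combined system terminates.
Since rules preserve values, every word then reduces to an irreducible word of the same value,
and what remains is uniqueness of irreducible representatives; it also yields the presentation,
as every word is congruent to its irreducible reduct. An irreducible word splits into
maximal one-alphabet syllables, each irreducible and nonempty, hence of nontrivial value in its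
factor. These values form a reduced word of the free product, which by the normal form theorem
for free products is determined by the value of the word, and each syllable is recovered from
its value by uniqueness in the factor.
-/

open FreeMonoid

section RewritingSystem

variable {α : Type} {R : Set (FreeMonoid α × FreeMonoid α)}

theorem wellFounded_flip_rewStep_iff :
    WellFounded (flip (RewStep R)) ↔
      ∀ f : ℕ → FreeMonoid α, ¬ ∀ m : ℕ, RewStep R (f m) (f (m + 1)) := by
  rw [wellFounded_iff_isEmpty_descending_chain, isEmpty_subtype]
  rfl

theorem RewIrreducible.of_mul_map_mul {β : Type} {S : Set (FreeMonoid β × FreeMonoid β)}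
    {f : FreeMonoid α →* FreeMonoid β} (hRS : Prod.map f f '' R ⊆ S) {x y : FreeMonoid β}
    {u : FreeMonoid α} (h : RewIrreducible S (x * f u * y)) : RewIrreducible R u := by
  rintro ⟨x', l, r, y', hlr, rfl⟩
  exact h ⟨x * f x', f l, f r, f y' * y, hRS ⟨(l, r), hlr, rfl⟩, by simp [mul_assoc]⟩

theorem fst_ne_one_of_wellFounded (hR : WellFounded (flip (RewStep R))) {u v : FreeMonoid α}
    (huv : (u, v) ∈ R) : u ≠ 1 := by
  rintro rfl
  -- an empty left-hand side could be rewritten forever: `v ^ m → v ^ (m + 1)`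
  exact wellFounded_flip_rewStep_iff.1 hR (v ^ ·) fun m =>
    ⟨v ^ m, 1, v, 1, huv, by simp, by simp [pow_succ]⟩

theorem rewIrreducible_one (hR : WellFounded (flip (RewStep R))) : RewIrreducible R 1 := by
  rintro ⟨x, u, v, y, huv, h⟩
  refine fst_ne_one_of_wellFounded hR huv ?_
  simp_all [eq_comm (a := (1 : FreeMonoid α))]

theorem exists_reflTransGen_rewStep_rewIrreducible (hR : WellFounded (flip (RewStep R)))
    (w : FreeMonoid α) :
    ∃ w', Relation.ReflTransGen (RewStep R) w w' ∧ RewIrreducible R w' := by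
  induction w using hR.induction with
  | _ w ih =>
    by_cases hw : RewIrreducible R w
    · exact ⟨w, .refl, hw⟩
    · obtain ⟨x, u, v, y, huv, rfl⟩ := not_not.1 hw
      obtain ⟨w', hreach, hw'⟩ := ih _ ⟨x, u, v, y, huv, rfl, rfl⟩
      exact ⟨w', .head ⟨x, u, v, y, huv, rfl, rfl⟩ hreach, hw'⟩

theorem conGen_of_reflTransGen_rewStep {w w' : FreeMonoid α}
    (h : Relation.ReflTransGen (RewStep R) w w') : conGen (fun u v => (u, v) ∈ R) w w' := by
  induction h with
  | refl => exact (conGen _).refl _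
  | tail _ hstep ih =>
    obtain ⟨x, u, v, y, huv, rfl, rfl⟩ := hstep
    exact (conGen _).trans ih <|
      (conGen _).mul ((conGen _).mul ((conGen _).refl x) (.of _ _ huv)) ((conGen _).refl y)

variable {G : Type*} [Group G] {π : α → G}

theorem conGen_le_ker_lift (hsound : ∀ p ∈ R, lift π p.1 = lift π p.2) :
    conGen (fun u v => (u, v) ∈ R) ≤ Con.ker (lift π) :=
  Con.conGen_le.2 fun _ _ huv => hsound _ huv

theorem isCompleteRewritingSystem_of_injOn
    (hsurj : Function.Surjective (lift π)) (hsound : ∀ p ∈ R, lift π p.1 = lift π p.2)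
    (hR : WellFounded (flip (RewStep R))) (hinj : Set.InjOn (lift π) {w | RewIrreducible R w}) :
    IsCompleteRewritingSystem π R := by
  have hnf (w : FreeMonoid α) : ∃ w', conGen (fun u v => (u, v) ∈ R) w w' ∧
      lift π w = lift π w' ∧ RewIrreducible R w' := by
    obtain ⟨w', hreach, hw'⟩ := exists_reflTransGen_rewStep_rewIrreducible hR w
    have hcon := conGen_of_reflTransGen_rewStep hreach
    exact ⟨w', hcon, conGen_le_ker_lift hsound hcon, hw'⟩
  refine ⟨hsurj, fun u v => ⟨fun huv => ?_, fun huv => conGen_le_ker_lift hsound huv⟩,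
    wellFounded_flip_rewStep_iff.1 hR, fun g => ?_⟩
  · obtain ⟨u', hu, hπu, hu'⟩ := hnf u
    obtain ⟨v', hv, hπv, hv'⟩ := hnf v
    obtain rfl := hinj hu' hv' (hπu.symm.trans (huv.trans hπv))
    exact (conGen _).trans hu ((conGen _).symm hv)
  · obtain ⟨w, rfl⟩ := hsurj g
    obtain ⟨w', -, hπw, hw'⟩ := hnf w
    exact ⟨w', ⟨hπw.symm, hw'⟩, fun w'' hw'' => hinj hw''.2 hw' (hw''.1.trans hπw)⟩

namespace IsCompleteRewritingSystem

variable (h : IsCompleteRewritingSystem π R)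
include h

theorem lift_fst_eq_lift_snd : ∀ p ∈ R, lift π p.1 = lift π p.2 :=
  fun p hp => (h.2.1 p.1 p.2).2 (.of _ _ hp)

theorem wellFounded : WellFounded (flip (RewStep R)) :=
  wellFounded_flip_rewStep_iff.2 h.2.2.1

theorem injOn : Set.InjOn (lift π) {w | RewIrreducible R w} :=
  fun w hw _ hw' heq => (h.2.2.2 (lift π w)).unique ⟨rfl, hw⟩ ⟨heq.symm, hw'⟩

theorem lift_ne_one {w : FreeMonoid α} (hw : RewIrreducible R w) (hne : w ≠ 1) :
    lift π w ≠ 1 :=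
  fun h1 => hne (h.injOn hw (rewIrreducible_one h.wellFounded) (h1.trans (map_one _).symm))

end IsCompleteRewritingSystem

end RewritingSystem

theorem List.eq_of_map_eq_of_injOn {α β : Type*} {f : α → β} {s : Set α} (hf : s.InjOn f) :
    ∀ {l l' : List α}, (∀ a ∈ l, a ∈ s) → (∀ a ∈ l', a ∈ s) → l.map f = l'.map f → l = l'
  | [], [], _, _, _ => rfl
  | a :: l, a' :: l', hl, hl', h => by
    simp only [List.map_cons, List.cons.injEq] at h
    simp only [List.mem_cons, forall_eq_or_imp] at hl hl'
    rw [hf hl.1 hl'.1 h.1, List.eq_of_map_eq_of_injOn hf hl.2 hl'.2 h.2]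

section Syllables

variable {α₁ α₂ : Type}

abbrev Syllable (α₁ α₂ : Type) := FreeMonoid α₁ ⊕ FreeMonoid α₂

def Syllable.toFreeMonoid : Syllable α₁ α₂ → FreeMonoid (α₁ ⊕ α₂) :=
  Sum.elim (map .inl) (map .inr)

def consSyllable : α₁ ⊕ α₂ → List (Syllable α₁ α₂) → List (Syllable α₁ α₂)
  | .inl a, .inl u :: l => .inl (of a * u) :: l
  | .inl a, l => .inl (of a) :: l
  | .inr b, .inr u :: l => .inr (of b * u) :: l
  | .inr b, l => .inr (of b) :: l

def syllables (w : FreeMonoid (α₁ ⊕ α₂)) : List (Syllable α₁ α₂) :=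
  w.toList.foldr consSyllable []

theorem syllables_of_mul (c : α₁ ⊕ α₂) (w : FreeMonoid (α₁ ⊕ α₂)) :
    syllables (of c * w) = consSyllable c (syllables w) :=
  rfl

theorem prod_map_toFreeMonoid_consSyllable (c : α₁ ⊕ α₂) (l : List (Syllable α₁ α₂)) :
    ((consSyllable c l).map Syllable.toFreeMonoid).prod =
      of c * (l.map Syllable.toFreeMonoid).prod := by
  rcases c with a | a <;> rcases l with _ | ⟨u | u, l⟩ <;>
    simp [consSyllable, Syllable.toFreeMonoid, mul_assoc]

theorem prod_map_toFreeMonoid_syllables (w : FreeMonoid (α₁ ⊕ α₂)) :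
    ((syllables w).map Syllable.toFreeMonoid).prod = w := by
  induction w using FreeMonoid.inductionOn' with
  | one => rfl
  | of_mul c w ih => rw [syllables_of_mul, prod_map_toFreeMonoid_consSyllable, ih]

theorem ne_one_of_mem_syllables {w : FreeMonoid (α₁ ⊕ α₂)} :
    ∀ s ∈ syllables w, Sum.elim (· ≠ 1) (· ≠ 1) s := by
  induction w using FreeMonoid.inductionOn' with
  | one => simp [syllables]
  | of_mul c w ih =>
    rw [syllables_of_mul]
    rcases c with a | a <;> rcases h : syllables w with _ | ⟨u | u, l⟩ <;>
      simp_all [consSyllable]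

theorem isChain_syllables (w : FreeMonoid (α₁ ⊕ α₂)) :
    (syllables w).IsChain fun s t => s.isLeft ≠ t.isLeft := by
  induction w using FreeMonoid.inductionOn' with
  | one => simp [syllables]
  | of_mul c w ih =>
    rw [syllables_of_mul]
    rcases c with a | a <;> rcases h : syllables w with _ | ⟨u | u, l⟩ <;>
      simp_all [consSyllable, List.isChain_cons]

end Syllables

section FreeProduct

open Monoid

variable {α₁ α₂ : Type} {R₁ : Set (FreeMonoid α₁ × FreeMonoid α₁)}
  {R₂ : Set (FreeMonoid α₂ × FreeMonoid α₂)}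
  {G₁ G₂ : Type} [Group G₁] [Group G₂] {π₁ : α₁ → G₁} {π₂ : α₂ → G₂}

def coprodRules (R₁ : Set (FreeMonoid α₁ × FreeMonoid α₁))
    (R₂ : Set (FreeMonoid α₂ × FreeMonoid α₂)) :
    Set (FreeMonoid (α₁ ⊕ α₂) × FreeMonoid (α₁ ⊕ α₂)) :=
  Prod.map (map .inl) (map .inl) '' R₁ ∪ Prod.map (map .inr) (map .inr) '' R₂

theorem mem_coprodRules {l r : FreeMonoid (α₁ ⊕ α₂)} :
    (l, r) ∈ coprodRules R₁ R₂ ↔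
      (∃ u v, (u, v) ∈ R₁ ∧ l = map .inl u ∧ r = map .inl v) ∨
      (∃ u v, (u, v) ∈ R₂ ∧ l = map .inr u ∧ r = map .inr v) := by
  simp [coprodRules, eq_comm]

def projLeft : FreeMonoid (α₁ ⊕ α₂) →* FreeMonoid α₁ := lift (Sum.elim of 1)

def projRight : FreeMonoid (α₁ ⊕ α₂) →* FreeMonoid α₂ := lift (Sum.elim 1 of)

@[simp]
theorem projLeft_map_inl (u : FreeMonoid α₁) : projLeft (map (.inl (β := α₂)) u) = u :=
  DFunLike.congr_fun (hom_eq (fun _ => rfl) : projLeft.comp (map .inl) = .id _) u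

@[simp]
theorem projLeft_map_inr (u : FreeMonoid α₂) : projLeft (map (.inr (α := α₁)) u) = 1 :=
  DFunLike.congr_fun (hom_eq (fun _ => rfl) : projLeft.comp (map .inr) = 1) u

@[simp]
theorem projRight_map_inl (u : FreeMonoid α₁) : projRight (map (.inl (β := α₂)) u) = 1 :=
  DFunLike.congr_fun (hom_eq (fun _ => rfl) : projRight.comp (map .inl) = 1) u

@[simp]
theorem projRight_map_inr (u : FreeMonoid α₂) : projRight (map (.inr (α := α₁)) u) = u :=
  DFunLike.congr_fun (hom_eq (fun _ => rfl) : projRight.comp (map .inr) = .id _) u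

theorem gameAdd_of_rewStep_coprodRules {w w' : FreeMonoid (α₁ ⊕ α₂)}
    (h : RewStep (coprodRules R₁ R₂) w w') :
    Prod.GameAdd (flip (RewStep R₁)) (flip (RewStep R₂))
      (projLeft w', projRight w') (projLeft w, projRight w) := by
  obtain ⟨x, l, r, y, hlr, rfl, rfl⟩ := h
  rcases mem_coprodRules.1 hlr with ⟨u, v, huv, rfl, rfl⟩ | ⟨u, v, huv, rfl, rfl⟩
  · simp only [map_mul, projLeft_map_inl, projRight_map_inl, mul_one]
    exact .fst (by exact ⟨projLeft x, u, v, projLeft y, huv, rfl, rfl⟩ : RewStep R₁ _ _)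
  · simp only [map_mul, projLeft_map_inr, projRight_map_inr, mul_one]
    exact .snd (by exact ⟨projRight x, u, v, projRight y, huv, rfl, rfl⟩ : RewStep R₂ _ _)

theorem wellFounded_flip_rewStep_coprodRules (h₁ : WellFounded (flip (RewStep R₁)))
    (h₂ : WellFounded (flip (RewStep R₂))) :
    WellFounded (flip (RewStep (coprodRules R₁ R₂))) :=
  Subrelation.wf (fun h => gameAdd_of_rewStep_coprodRules h)
    (InvImage.wf (fun w => (projLeft w, projRight w)) (h₁.prod_gameAdd h₂))

theorem rewIrreducible_of_mem_syllables {w : FreeMonoid (α₁ ⊕ α₂)}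
    (hw : RewIrreducible (coprodRules R₁ R₂) w) {s : Syllable α₁ α₂} (hs : s ∈ syllables w) :
    Sum.elim (RewIrreducible R₁) (RewIrreducible R₂) s := by
  obtain ⟨P, Q, hPQ⟩ := List.append_of_mem hs
  rw [← prod_map_toFreeMonoid_syllables w, hPQ] at hw
  simp only [List.map_append, List.map_cons, List.prod_append, List.prod_cons, ← mul_assoc] at hw
  rcases s with u | u
  · exact RewIrreducible.of_mul_map_mul Set.subset_union_left hw
  · exact RewIrreducible.of_mul_map_mul Set.subset_union_right hw

def coprodGen (π₁ : α₁ → G₁) (π₂ : α₂ → G₂) : α₁ ⊕ α₂ → Coprod G₁ G₂ :=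
  Sum.elim (Coprod.inl ∘ π₁) (Coprod.inr ∘ π₂)

@[simp]
theorem lift_coprodGen_map_inl (u : FreeMonoid α₁) :
    lift (coprodGen π₁ π₂) (map .inl u) = Coprod.inl (lift π₁ u) :=
  DFunLike.congr_fun (hom_eq (fun _ => rfl) :
    (lift (coprodGen π₁ π₂)).comp (map .inl) = Coprod.inl.comp (lift π₁)) u

@[simp]
theorem lift_coprodGen_map_inr (u : FreeMonoid α₂) :
    lift (coprodGen π₁ π₂) (map .inr u) = Coprod.inr (lift π₂ u) :=
  DFunLike.congr_fun (hom_eq (fun _ => rfl) :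
    (lift (coprodGen π₁ π₂)).comp (map .inr) = Coprod.inr.comp (lift π₂)) u

theorem surjective_lift_coprodGen (h₁ : Function.Surjective (lift π₁))
    (h₂ : Function.Surjective (lift π₂)) : Function.Surjective (lift (coprodGen π₁ π₂)) := by
  intro g
  induction g using Coprod.induction_on with
  | inl g => obtain ⟨u, rfl⟩ := h₁ g; exact ⟨map .inl u, lift_coprodGen_map_inl u⟩
  | inr g => obtain ⟨u, rfl⟩ := h₂ g; exact ⟨map .inr u, lift_coprodGen_map_inr u⟩
  | mul _ _ hx hy =>
    obtain ⟨u, rfl⟩ := hx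
    obtain ⟨v, rfl⟩ := hy
    exact ⟨u * v, map_mul _ u v⟩

theorem lift_coprodGen_fst_eq_snd (h₁ : ∀ p ∈ R₁, lift π₁ p.1 = lift π₁ p.2)
    (h₂ : ∀ p ∈ R₂, lift π₂ p.1 = lift π₂ p.2) :
    ∀ p ∈ coprodRules R₁ R₂, lift (coprodGen π₁ π₂) p.1 = lift (coprodGen π₁ π₂) p.2 := by
  rintro ⟨l, r⟩ hlr
  rcases mem_coprodRules.1 hlr with ⟨u, v, huv, rfl, rfl⟩ | ⟨u, v, huv, rfl, rfl⟩
  · simpa using congrArg Coprod.inl (h₁ _ huv)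
  · simpa using congrArg Coprod.inr (h₂ _ huv)

/-- `G₁ ∗ G₂` as a free product of a `Bool`-indexed family, to use the normal form theorem
`Monoid.CoprodI.Word.equiv`. -/
abbrev Monoid.Coprod.Factor (G₁ G₂ : Type) (b : Bool) : Type := cond b G₁ G₂

instance (b : Bool) : Group (Coprod.Factor G₁ G₂ b) := by cases b <;> assumption

def Monoid.Coprod.toCoprodI : Coprod G₁ G₂ →* CoprodI (Coprod.Factor G₁ G₂) :=
  Coprod.lift (CoprodI.of (M := Coprod.Factor G₁ G₂) (i := true))
    (CoprodI.of (M := Coprod.Factor G₁ G₂) (i := false))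

def Syllable.eval (π₁ : α₁ → G₁) (π₂ : α₂ → G₂) :
    Syllable α₁ α₂ → Σ b, Coprod.Factor G₁ G₂ b
  | .inl u => ⟨true, lift π₁ u⟩
  | .inr u => ⟨false, lift π₂ u⟩

theorem toCoprodI_lift_toFreeMonoid (s : Syllable α₁ α₂) :
    Coprod.toCoprodI (lift (coprodGen π₁ π₂) s.toFreeMonoid) =
      CoprodI.of (s.eval π₁ π₂).2 := by
  rcases s with u | u <;> simp [Syllable.toFreeMonoid, Coprod.toCoprodI] <;> rfl

theorem Syllable.eval_injOn (h₁ : IsCompleteRewritingSystem π₁ R₁)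
    (h₂ : IsCompleteRewritingSystem π₂ R₂) :
    {s : Syllable α₁ α₂ | Sum.elim (RewIrreducible R₁) (RewIrreducible R₂) s}.InjOn
      (Syllable.eval π₁ π₂) := by
  rintro (u | u) hu (v | v) hv huv <;>
    simp only [Syllable.eval, Sigma.mk.injEq, Bool.true_eq_false, Bool.false_eq_true, true_and,
      false_and, heq_eq_eq] at huv
  · rw [h₁.injOn hu hv huv]
  · rw [h₂.injOn hu hv huv]

def reducedWord (h₁ : IsCompleteRewritingSystem π₁ R₁) (h₂ : IsCompleteRewritingSystem π₂ R₂)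
    {w : FreeMonoid (α₁ ⊕ α₂)} (hw : RewIrreducible (coprodRules R₁ R₂) w) :
    CoprodI.Word (Coprod.Factor G₁ G₂) where
  toList := (syllables w).map (Syllable.eval π₁ π₂)
  ne_one := by
    simp only [List.mem_map, forall_exists_index, and_imp, forall_apply_eq_imp_iff₂]
    intro s hs
    have hne := ne_one_of_mem_syllables s hs
    have hirr := rewIrreducible_of_mem_syllables hw hs
    rcases s with u | u
    · exact h₁.lift_ne_one hirr hne
    · exact h₂.lift_ne_one hirr hne
  chain_ne := by
    refine List.isChain_map_of_isChain _ (fun s t hst => ?_) (isChain_syllables w)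
    rcases s with u | u <;> rcases t with v | v <;> simp_all [Syllable.eval]

theorem prod_reducedWord (h₁ : IsCompleteRewritingSystem π₁ R₁)
    (h₂ : IsCompleteRewritingSystem π₂ R₂) {w : FreeMonoid (α₁ ⊕ α₂)}
    (hw : RewIrreducible (coprodRules R₁ R₂) w) :
    (reducedWord h₁ h₂ hw).prod = Coprod.toCoprodI (lift (coprodGen π₁ π₂) w) := by
  conv_rhs => rw [← prod_map_toFreeMonoid_syllables w]
  simp only [CoprodI.Word.prod, reducedWord, map_list_prod, List.map_map]
  congr 1
  exact List.map_congr_left fun s _ => (toCoprodI_lift_toFreeMonoid s).symm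

theorem injOn_lift_coprodGen (h₁ : IsCompleteRewritingSystem π₁ R₁)
    (h₂ : IsCompleteRewritingSystem π₂ R₂) :
    Set.InjOn (lift (coprodGen π₁ π₂)) {w | RewIrreducible (coprodRules R₁ R₂) w} := by
  classical
  intro w hw w' hw' heq
  have hword : reducedWord h₁ h₂ hw = reducedWord h₁ h₂ hw' :=
    CoprodI.Word.equiv.symm.injective <| by
      simp only [CoprodI.Word.equiv, Equiv.coe_fn_symm_mk, prod_reducedWord, heq]
  have hsyl : syllables w = syllables w' :=
    List.eq_of_map_eq_of_injOn (Syllable.eval_injOn h₁ h₂)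
      (fun _ hs => rewIrreducible_of_mem_syllables hw hs)
      (fun _ hs => rewIrreducible_of_mem_syllables hw' hs)
      (congrArg CoprodI.Word.toList hword)
  rw [← prod_map_toFreeMonoid_syllables w, hsyl, prod_map_toFreeMonoid_syllables]

theorem IsCompleteRewritingSystem.coprod (h₁ : IsCompleteRewritingSystem π₁ R₁)
    (h₂ : IsCompleteRewritingSystem π₂ R₂) :
    IsCompleteRewritingSystem (coprodGen π₁ π₂) (coprodRules R₁ R₂) :=
  isCompleteRewritingSystem_of_injOn
    (surjective_lift_coprodGen h₁.1 h₂.1)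
    (lift_coprodGen_fst_eq_snd h₁.lift_fst_eq_lift_snd h₂.lift_fst_eq_lift_snd)
    (wellFounded_flip_rewStep_coprodRules h₁.wellFounded h₂.wellFounded)
    (injOn_lift_coprodGen h₁ h₂)

end FreeProduct

/-- The free product of two groups with finite complete rewriting
systems has a finite complete rewriting system. -/
theorem freeProduct_hasFiniteCompleteRewritingSystem
    (G₁ G₂ : Type) [Group G₁] [Group G₂]
    (h₁ : HasFiniteCompleteRewritingSystem G₁)
    (h₂ : HasFiniteCompleteRewritingSystem G₂) :
    HasFiniteCompleteRewritingSystem (Monoid.Coprod G₁ G₂) := by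
  obtain ⟨α₁, _, π₁, R₁, hR₁, hπR₁⟩ := h₁
  obtain ⟨α₂, _, π₂, R₂, hR₂, hπR₂⟩ := h₂
  exact ⟨α₁ ⊕ α₂, inferInstance, coprodGen π₁ π₂, coprodRules R₁ R₂,
    (hR₁.image _).union (hR₂.image _), hπR₁.coprod hπR₂⟩
end

section
/- If a group G contains a subgroup of finite index isomorphic to ℤ, then G has a finite complete rewriting system. -/
/-!
If `H ≅ ℤ` is generated by `z` and has finite index, every element of `G` is uniquely `r * z ^ k`
with `r` either `1` or one of finitely many nontrivial coset representatives, so the words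
`[r] z^k` (with `z^k` spelled in `z` or in `z⁻¹`) form a set of normal forms in bijection with `G`.
The rules `x r → normalForm (x r)`, for every letter `x` and representative `r`, together with
`z z⁻¹ → 1` and `z⁻¹ z → 1`, preserve values, and a word is irreducible exactly when it is a
normal form; so once rewriting terminates, every word reduces to the normal form of its value.

Termination: give each letter the weight `K ^ m`, where `m` counts the representative letters at
or to the right of it, and `K` exceeds every `|k|` occurring in a right-hand side. In a rule
`x r → r' z^k` the letter `r'` inherits the weight `K ^ (m + 1)` of `r`, while `x`, of weight at
least `K ^ (m + 1)`, is traded for `|k| < K` letters of weight `K ^ m`; no other weight increases.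
-/

section Rewriting

variable {α : Type} {R : Set (FreeMonoid α × FreeMonoid α)}

theorem RewStep.conGen {w w' : FreeMonoid α} (h : RewStep R w w') :
    conGen (fun u v => (u, v) ∈ R) w w' := by
  obtain ⟨x, u, v, y, huv, rfl, rfl⟩ := h
  exact .mul (.mul (.refl x) (.of _ _ huv)) (.refl y)

theorem exists_rewIrreducible_conGen (hwf : WellFounded (flip (RewStep R)))
    (w : FreeMonoid α) :
    ∃ w', RewIrreducible R w' ∧ conGen (fun u v => (u, v) ∈ R) w w' := by
  induction w using hwf.induction with
  | _ w ih =>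
    by_cases hw : RewIrreducible R w
    · exact ⟨w, hw, (conGen _).refl w⟩
    · obtain ⟨x, u, v, y, huv, rfl⟩ := not_not.mp hw
      have hstep : RewStep R (x * u * y) (x * v * y) := ⟨x, u, v, y, huv, rfl, rfl⟩
      obtain ⟨w', hw', hconv⟩ := ih _ hstep
      exact ⟨w', hw', (conGen _).trans hstep.conGen hconv⟩

theorem isCompleteRewritingSystem_of_wellFounded {G : Type*} [Group G] {π : α → G}
    (hsurj : Function.Surjective (FreeMonoid.lift π))
    (hR : ∀ p ∈ R, FreeMonoid.lift π p.1 = FreeMonoid.lift π p.2)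
    (hwf : WellFounded (flip (RewStep R)))
    (hinj : Set.InjOn (FreeMonoid.lift π) {w | RewIrreducible R w}) :
    IsCompleteRewritingSystem π R := by
  have hker : conGen (fun u v => (u, v) ∈ R) ≤ Con.ker (FreeMonoid.lift π) :=
    Con.conGen_le.mpr fun u v huv => hR (u, v) huv
  refine ⟨hsurj, fun u v => ⟨fun h => ?_, fun h => hker h⟩, fun f hf => ?_, fun g => ?_⟩
  · obtain ⟨u', hu', hu⟩ := exists_rewIrreducible_conGen hwf u
    obtain ⟨v', hv', hv⟩ := exists_rewIrreducible_conGen hwf v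
    obtain rfl : u' = v' := hinj hu' hv' ((hker hu).symm.trans (h.trans (hker hv)))
    exact (conGen _).trans hu ((conGen _).symm hv)
  · exact (wellFounded_iff_isEmpty_descending_chain.mp hwf).false ⟨f, hf⟩
  · obtain ⟨w, rfl⟩ := hsurj g
    obtain ⟨w', hw', hconv⟩ := exists_rewIrreducible_conGen hwf w
    exact ⟨w', ⟨(hker hconv).symm, hw'⟩,
      fun w'' ⟨h, hw''⟩ => hinj hw'' hw' (h.trans (hker hconv))⟩

end Rewriting

namespace List

variable {α : Type*} (p : α → Bool) (K : ℕ)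

def suffixWeight : List α → ℕ
  | [] => 0
  | x :: t => K ^ (x :: t).countP p + suffixWeight t

variable {p K}

theorem suffixWeight_append_lt_append (hK : 1 ≤ K) (s : List α) {t t' : List α}
    (hc : t'.countP p ≤ t.countP p) (hw : suffixWeight p K t' < suffixWeight p K t) :
    suffixWeight p K (s ++ t') < suffixWeight p K (s ++ t) := by
  induction s with
  | nil => exact hw
  | cons x s ih =>
    have hcount : (x :: (s ++ t')).countP p ≤ (x :: (s ++ t)).countP p := by
      simp only [countP_cons, countP_append]; omega
    exact Nat.add_lt_add_of_le_of_lt (Nat.pow_le_pow_right hK hcount) ih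

theorem suffixWeight_replicate_append {c : α} (hc : p c = false) (n : ℕ) (t : List α) :
    suffixWeight p K (replicate n c ++ t) = n * K ^ t.countP p + suffixWeight p K t := by
  induction n with
  | zero => simp
  | succ n ih =>
    rw [replicate_succ, cons_append, suffixWeight, ih, ← cons_append, ← replicate_succ]
    simp [countP_append, countP_replicate, hc]
    ring

theorem suffixWeight_lt_cons (hK : 1 ≤ K) (x : α) (t : List α) :
    suffixWeight p K t < suffixWeight p K (x :: t) := by
  have := Nat.one_le_pow ((x :: t).countP p) K hK
  simp only [suffixWeight]; omega

theorem suffixWeight_append_replicate_append_lt {x y c : α} {P : List α} {n : ℕ}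
    (hy : p y) (hc : p c = false) (hP : P.length ≤ 1) (hn : n < K) (t : List α) :
    suffixWeight p K (P ++ replicate n c ++ t) < suffixWeight p K (x :: y :: t) := by
  have hK : 1 ≤ K := by omega
  have hprefix : suffixWeight p K (P ++ (replicate n c ++ t)) ≤
      K ^ (t.countP p + 1) + suffixWeight p K (replicate n c ++ t) := by
    match P, hP with
    | [], _ => simp
    | [q], _ =>
      have hq : (q :: (replicate n c ++ t)).countP p ≤ t.countP p + 1 := by
        rw [countP_cons, countP_append, countP_replicate, hc, if_neg Bool.false_ne_true]
        split <;> omega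
      exact Nat.add_le_add_right (Nat.pow_le_pow_right hK hq) _
  have hxy : t.countP p + 1 ≤ (x :: y :: t).countP p := by
    rw [countP_cons, countP_cons_of_pos hy]; omega
  have hz : n * K ^ t.countP p < K ^ (t.countP p + 1) := by
    rw [pow_succ']; exact Nat.mul_lt_mul_of_pos_right hn (by positivity)
  calc suffixWeight p K (P ++ replicate n c ++ t)
      ≤ K ^ (t.countP p + 1) + (n * K ^ t.countP p + suffixWeight p K t) := by
        rw [append_assoc, ← suffixWeight_replicate_append hc]; exact hprefix
    _ < K ^ (x :: y :: t).countP p + (K ^ (t.countP p + 1) + suffixWeight p K t) := by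
        have := Nat.pow_le_pow_right hK hxy
        omega
    _ = suffixWeight p K (x :: y :: t) := by simp [suffixWeight, hy]

end List

theorem wellFounded_rewStep_of_suffixWeight {α : Type} {R : Set (FreeMonoid α × FreeMonoid α)}
    {p : α → Bool} {K : ℕ} (hK : 1 ≤ K)
    (hR : ∀ q ∈ R, q.2.toList.countP p ≤ q.1.toList.countP p ∧
      ∀ t, List.suffixWeight p K (q.2.toList ++ t) < List.suffixWeight p K (q.1.toList ++ t)) :
    WellFounded (flip (RewStep R)) := by
  refine Subrelation.wf ?_ (InvImage.wf (fun w => List.suffixWeight p K w.toList) wellFounded_lt)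
  rintro w' w ⟨x, u, v, y, huv, rfl, rfl⟩
  obtain ⟨hcount, hweight⟩ := hR (u, v) huv
  simp only [InvImage, FreeMonoid.toList_mul, List.append_assoc]
  refine List.suffixWeight_append_lt_append hK _ ?_ (hweight _)
  simp only [List.countP_append]
  exact Nat.add_le_add_right hcount _

section CosetZpow

variable {G : Type} [Group G] {T : Type} (r : T → G) (z : G)

def cosetZpow (q : Option T × ℤ) : G := q.1.elim 1 r * z ^ q.2

namespace CosetZpow

def letterValue : Bool ⊕ T → G
  | .inl true => z
  | .inl false => z⁻¹
  | .inr t => r t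

@[simp]
theorem letterValue_inr (t : T) : letterValue r z (.inr t) = r t := rfl

variable (T) in
def zpowWord : ℤ → List (Bool ⊕ T)
  | .ofNat n => .replicate n (.inl true)
  | .negSucc n => .replicate (n + 1) (.inl false)

def normalWord (q : Option T × ℤ) : List (Bool ⊕ T) := q.1.toList.map .inr ++ zpowWord T q.2

noncomputable def normalForm (g : G) : List (Bool ⊕ T) :=
  normalWord (Function.invFun (cosetZpow r z) g)

noncomputable def rules : Set (FreeMonoid (Bool ⊕ T) × FreeMonoid (Bool ⊕ T)) :=
  Set.range (fun xt : (Bool ⊕ T) × T =>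
      (.ofList [xt.1, .inr xt.2], .ofList (normalForm r z (letterValue r z xt.1 * r xt.2)))) ∪
    Set.range (fun b : Bool => (.ofList [.inl b, .inl !b], 1))

def NormalPair : Bool ⊕ T → Bool ⊕ T → Prop
  | x, .inl b => x ≠ .inl !b
  | _, .inr _ => False

theorem prod_map_zpowWord (k : ℤ) : ((zpowWord T k).map (letterValue r z)).prod = z ^ k := by
  cases k with
  | ofNat n => simp [zpowWord, letterValue]
  | negSucc n => simp [zpowWord, letterValue, zpow_negSucc]

theorem lift_ofList_normalWord (q : Option T × ℤ) :
    FreeMonoid.lift (letterValue r z) (.ofList (normalWord q)) = cosetZpow r z q := by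
  rw [FreeMonoid.lift_apply, FreeMonoid.toList_ofList, normalWord, List.map_append,
    List.prod_append, prod_map_zpowWord]
  obtain ⟨_ | t, k⟩ := q <;> simp [cosetZpow, letterValue]

theorem zpowWord_eq_replicate (k : ℤ) : ∃ b, zpowWord T k = .replicate k.natAbs (.inl b) := by
  cases k with
  | ofNat n => exact ⟨true, rfl⟩
  | negSucc n => exact ⟨false, rfl⟩

theorem exists_replicate_eq_zpowWord (n : ℕ) (b : Bool) :
    ∃ k, List.replicate n (.inl b) = zpowWord T k := by
  match n, b with
  | n, true => exact ⟨n, rfl⟩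
  | 0, false => exact ⟨0, rfl⟩
  | n + 1, false => exact ⟨.negSucc n, rfl⟩

theorem rules_finite [Finite T] : (rules r z).Finite :=
  (Set.finite_range _).union (Set.finite_range _)

theorem lift_eq_of_mem_rules (hsurj : Function.Surjective (cosetZpow r z)) :
    ∀ q ∈ rules r z,
      FreeMonoid.lift (letterValue r z) q.1 = FreeMonoid.lift (letterValue r z) q.2 := by
  rintro _ (⟨⟨x, t⟩, rfl⟩ | ⟨b, rfl⟩)
  · simp only [normalForm, lift_ofList_normalWord, Function.invFun_eq (hsurj _)]
    simp [FreeMonoid.lift_apply]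
  · cases b <;> simp [letterValue]

theorem wellFounded_rules [Finite T] : WellFounded (flip (RewStep (rules r z))) := by
  obtain ⟨M, hM⟩ := (Set.finite_range fun xt : (Bool ⊕ T) × T =>
    (Function.invFun (cosetZpow r z) (letterValue r z xt.1 * r xt.2)).2.natAbs).bddAbove
  refine wellFounded_rewStep_of_suffixWeight (p := Sum.isRight) (K := M + 1) (by omega) ?_
  rintro _ (⟨⟨x, t⟩, rfl⟩ | ⟨b, rfl⟩)
  · have hn := Nat.lt_succ_of_le (hM ⟨(x, t), rfl⟩)
    simp only [FreeMonoid.toList_ofList, normalForm, normalWord] at hn ⊢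
    generalize Function.invFun (cosetZpow r z) (letterValue r z x * r t) = q at hn ⊢
    obtain ⟨o, k⟩ := q
    obtain ⟨c, hc⟩ := zpowWord_eq_replicate (T := T) k
    have hP : (o.toList.map (Sum.inr (α := Bool))).length ≤ 1 := by cases o <;> simp
    rw [hc]
    refine ⟨?_, fun l => List.suffixWeight_append_replicate_append_lt rfl rfl hP hn l⟩
    cases o <;> simp [List.countP_cons, List.countP_replicate]
  · refine ⟨by simp, fun l => ?_⟩
    exact (List.suffixWeight_lt_cons (by omega) _ _).trans
      (List.suffixWeight_lt_cons (by omega) _ _)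

theorem isChain_normalPair_of_rewIrreducible {w : FreeMonoid (Bool ⊕ T)}
    (hw : RewIrreducible (rules r z) w) : w.toList.IsChain NormalPair := by
  refine List.isChain_iff_forall_rel_of_append_cons_cons.mpr fun a b l₁ l₂ hsplit => ?_
  have hnot : ∀ v, (.ofList [a, b], v) ∉ rules r z := fun v hv =>
    hw ⟨.ofList l₁, .ofList [a, b], v, .ofList l₂, hv, by
      rw [← FreeMonoid.ofList_toList w, hsplit]; simp [FreeMonoid.ofList_append, mul_assoc]⟩
  rcases b with c | t
  · rintro rfl
    exact hnot 1 (.inr ⟨!c, by simp⟩)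
  · exact hnot _ (.inl ⟨(a, t), rfl⟩)

theorem exists_eq_replicate_of_isChain_normalPair {l : List (Bool ⊕ T)}
    (hl : l.IsChain NormalPair) :
    ∃ (o : Option T) (n : ℕ) (b : Bool), l = o.toList.map .inr ++ .replicate n (.inl b) := by
  induction l with
  | nil => exact ⟨none, 0, true, rfl⟩
  | cons x l ih =>
    rw [List.isChain_cons] at hl
    obtain ⟨o, n, b, rfl⟩ := ih hl.2
    match o, n, x, hl.1 with
    | some _, _, _, h => exact (h _ rfl).elim
    | none, 0, .inl c, _ => exact ⟨none, 1, c, rfl⟩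
    | none, 0, .inr s, _ => exact ⟨some s, 0, b, rfl⟩
    | none, n + 1, .inr s, _ => exact ⟨some s, n + 1, b, rfl⟩
    | none, n + 1, .inl c, h =>
      obtain rfl : c = b := by simpa [NormalPair] using h _ rfl
      exact ⟨none, n + 2, c, rfl⟩

theorem exists_eq_ofList_normalWord {w : FreeMonoid (Bool ⊕ T)}
    (hw : RewIrreducible (rules r z) w) :
    ∃ q, w = .ofList (normalWord q) := by
  obtain ⟨o, n, b, hl⟩ :=
    exists_eq_replicate_of_isChain_normalPair (isChain_normalPair_of_rewIrreducible r z hw)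
  obtain ⟨k, hk⟩ := exists_replicate_eq_zpowWord (T := T) n b
  exact ⟨(o, k), by rw [← FreeMonoid.ofList_toList w, hl, hk, normalWord]⟩

theorem injOn_rewIrreducible (hinj : Function.Injective (cosetZpow r z)) :
    Set.InjOn (FreeMonoid.lift (letterValue r z)) {w | RewIrreducible (rules r z) w} := by
  intro w hw w' hw' h
  obtain ⟨q, rfl⟩ := exists_eq_ofList_normalWord r z hw
  obtain ⟨q', rfl⟩ := exists_eq_ofList_normalWord r z hw'
  rw [lift_ofList_normalWord, lift_ofList_normalWord] at h
  rw [hinj h]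

end CosetZpow

open CosetZpow in
theorem hasFiniteCompleteRewritingSystem_of_bijective_cosetZpow [Finite T]
    (hbij : Function.Bijective (cosetZpow r z)) : HasFiniteCompleteRewritingSystem G := by
  have hsurj : Function.Surjective (FreeMonoid.lift (letterValue r z)) := fun g =>
    ⟨.ofList (normalForm r z g), by
      rw [normalForm, lift_ofList_normalWord, Function.invFun_eq (hbij.2 g)]⟩
  exact ⟨Bool ⊕ T, inferInstance, letterValue r z, rules r z, rules_finite r z,
    isCompleteRewritingSystem_of_wellFounded hsurj (lift_eq_of_mem_rules r z hbij.2)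
      (wellFounded_rules r z) (injOn_rewIrreducible r z hbij.1)⟩

end CosetZpow

theorem Subgroup.exists_bijective_cosetZpow {G : Type} [Group G] (H : Subgroup G) [H.FiniteIndex]
    (e : H ≃* Multiplicative ℤ) :
    ∃ (T : Type) (_ : Finite T) (r : T → G) (z : G), Function.Bijective (cosetZpow r z) := by
  classical
  obtain ⟨S, hS, h1⟩ := H.exists_isComplement_left 1
  have : Finite S := hS.finite_left
  refine ⟨{s : S // s ≠ ⟨1, h1⟩}, inferInstance, fun s => s.1, e.symm (.ofAdd 1), ?_⟩
  convert hS.comp ((Equiv.optionSubtypeNe ⟨1, h1⟩).prodCongr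
    (Multiplicative.ofAdd.trans e.symm.toEquiv)).bijective using 1
  ext ⟨o, k⟩
  have hz : ((e.symm (.ofAdd 1) : H) : G) ^ k = e.symm (.ofAdd k) := by
    rw [← Subgroup.coe_zpow, ← map_zpow, ← ofAdd_zsmul, smul_eq_mul, mul_one]
  cases o <;> simp [cosetZpow, hz]

/-- A group with a finite index subgroup isomorphic to ℤ has a finite
complete rewriting system. -/
theorem virtuallyZ_hasFiniteCompleteRewritingSystem
    (G : Type) [Group G] (H : Subgroup G) (hfi : H.FiniteIndex)
    (e : H ≃* Multiplicative ℤ) :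
    HasFiniteCompleteRewritingSystem G := by
  obtain ⟨T, _, r, z, hbij⟩ := H.exists_bijective_cosetZpow e
  exact hasFiniteCompleteRewritingSystem_of_bijective_cosetZpow r z hbij
end
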